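/- arXiv:1701.08276 — 5 statements merged into one kernel-verified Lean document; each statement's English description precedes it below -/
import Mathlib

section
/- If L = (l_1,...,l_n) is a positive continuous function from C^n to R_+^n belonging to the class Q^n, then for every j in {1,...,n} and every fixed point z* in C^n, the quantity |z_j| · l_j(z* + z_j e_j) tends to infinity as |z_j| tends to infinity. -/
/-!
Fix `C > 0` and apply the `Q^n` condition with radius `C e_j`: there is `M` such that
`l_j(z) ≤ M l_j(z⁰)` whenever `z` differs from `z⁰` only in the `j`-th coordinate and
`|z_j - z⁰_j| l_j(z⁰) ≤ C`. If `|w| l_j(z* + w e_j) < C`, this applies to `z⁰ = z* + w e_j`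
and `z = z*`, giving `|w| l_j(z*) ≤ M C`, which fails once `|w|` is large.
-/

open Filter

/-- The class `Q^n`: for every nonnegative radius vector `R` and every index `j`,
`0 < λ_{1,j}(R) ≤ λ_{2,j}(R) < ∞`, expressed via uniform lower/upper bounds for
the ratios `l_j z / l_j z⁰` over the closed polydisc `D^n[z⁰, R / L z⁰]`. -/
def inQn {n : ℕ} (L : (Fin n → ℂ) → Fin n → ℝ) : Prop :=
  ∀ R : Fin n → ℝ, (∀ j, 0 ≤ R j) → ∀ j : Fin n,
    ∃ m M : ℝ, 0 < m ∧
      ∀ z0 z : Fin n → ℂ, (∀ k, ‖z k - z0 k‖ ≤ R k / L z0 k) →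
        m ≤ L z j / L z0 j ∧ L z j / L z0 j ≤ M

lemma inQn.exists_le_mul_of_coordinate_dist_le {n : ℕ} {L : (Fin n → ℂ) → Fin n → ℝ}
    (hpos : ∀ z j, 0 < L z j) (hQ : inQn L) (j : Fin n) {C : ℝ} (hC : 0 ≤ C) :
    ∃ M > 0, ∀ z0 z : Fin n → ℂ, (∀ k ≠ j, z k = z0 k) → ‖z j - z0 j‖ * L z0 j ≤ C →
      L z j ≤ M * L z0 j := by
  have hR : ∀ k, 0 ≤ Pi.single (M := fun _ => ℝ) j C k := fun k => by
    rcases eq_or_ne k j with rfl | hk <;> simp [*]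
  obtain ⟨m, M, hm, hmM⟩ := hQ _ hR j
  refine ⟨M, ?_, fun z0 z hoff hj => ?_⟩
  · have hcenter := hmM 0 0 fun k => by simpa using div_nonneg (hR k) (hpos 0 k).le
    exact hm.trans_le (hcenter.1.trans hcenter.2)
  · have hdisc : ∀ k, ‖z k - z0 k‖ ≤ Pi.single (M := fun _ => ℝ) j C k / L z0 k := by
      intro k
      rcases eq_or_ne k j with rfl | hk
      · simpa [le_div_iff₀ (hpos z0 k)] using hj
      · simp [hoff k hk, hk]
    rw [← div_le_iff₀ (hpos z0 j)]
    exact (hmM z0 z hdisc).2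

theorem stmt0_general {n : ℕ} (L : (Fin n → ℂ) → Fin n → ℝ)
    (hpos : ∀ z j, 0 < L z j)
    (hQ : inQn L) (j : Fin n) (zstar : Fin n → ℂ) :
    Tendsto (fun w : ℂ => ‖w‖ * L (fun k => zstar k + if k = j then w else 0) j)
      (comap (fun w : ℂ => ‖w‖) atTop) atTop := by
  rw [tendsto_atTop]
  intro C
  obtain ⟨M, hM, hbound⟩ := hQ.exists_le_mul_of_coordinate_dist_le hpos j (le_max_right C 0)
  have hc := hpos zstar j
  rw [eventually_comap]
  filter_upwards [eventually_gt_atTop (max C 0 * M / L zstar j)] with t ht w rfl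
  set z : Fin n → ℂ := fun k => zstar k + if k = j then w else 0
  by_contra! hlt
  have hzstar : L zstar j ≤ M * L z j :=
    hbound z zstar (fun k hk => by simp [z, hk]) (by
      simpa [z] using hlt.le.trans (le_max_left C 0))
  rw [div_lt_iff₀ hc] at ht
  nlinarith [le_max_left C 0, norm_nonneg w]

/-- If `L ∈ Q^n` then for every `j` and fixed `z* ∈ ℂ^n`,
`|z_j| · l_j (z* + z_j e_j) → ∞` as `|z_j| → ∞`. -/
theorem stmt0 {n : ℕ} (L : (Fin n → ℂ) → Fin n → ℝ)
    (hpos : ∀ z j, 0 < L z j) (hcont : Continuous L)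
    (hQ : inQn L) (j : Fin n) (zstar : Fin n → ℂ) :
    Tendsto (fun w : ℂ => ‖w‖ * L (fun k => zstar k + if k = j then w else 0) j)
      (comap (fun w : ℂ => ‖w‖) atTop) atTop :=
  stmt0_general L hpos hQ j zstar
end

section
/- Let l_j : C^n → C and all partial derivatives ∂l_j/∂z_m be continuous on C^n for all j, m ∈ {1,...,n}. If there are constants P > 0 and c > 0 with (1/(c+|l_j(z)|)) · |∂l_j(z)/∂z_m| ≤ P for all z ∈ C^n and all j, m, then the function L*(z) = (c+|l_1(z)|, ..., c+|l_n(z)|) belongs to the class Q^n; moreover λ_{2,j}(R) ≤ exp((P/c)(r_1+...+r_n)) and λ_{1,j}(R) ≥ exp(−(P/c)(r_1+...+r_n)) for all R = (r_1,...,r_n). -/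
/-- Partial derivative `∂f/∂z_m` of a function `f : ℂ^n → ℂ`. -/
noncomputable def pd {n : ℕ} (m : Fin n) (f : (Fin n → ℂ) → ℂ) : (Fin n → ℂ) → ℂ :=
  fun z => deriv (fun w => f (Function.update z m w)) (z m)

/-!
Along the segment from `z⁰` to `z`, the derivative of `t ↦ l_j(z⁰ + t(z - z⁰))` is bounded by
`P · ∑ ‖z_k - z⁰_k‖ · (c + |l_j|)`, so Grönwall's inequality gives
`c + |l_j(z)| ≤ (c + |l_j(z⁰)|) · exp (P ∑ ‖z_k - z⁰_k‖)`. On the polydisc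
`‖z_k - z⁰_k‖ ≤ r_k / L*_k(z⁰) ≤ r_k / c`, and exchanging `z` and `z⁰` gives the lower bound.
-/

open Real Set

theorem gronwallBound_mul_eq (δ K c : ℝ) : gronwallBound δ K (K * c) 1 = (δ + c) * exp K - c := by
  unfold gronwallBound
  split_ifs with hK
  · simp [hK]
  · field_simp
    ring

theorem add_norm_le_mul_exp_of_norm_deriv_le {F : Type*} [NormedAddCommGroup F]
    [NormedSpace ℝ F] {g g' : ℝ → F} {K c : ℝ} (hg : ContinuousOn g (Icc 0 1))
    (hg' : ∀ t ∈ Ico (0 : ℝ) 1, HasDerivWithinAt g (g' t) (Ici t) t)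
    (hbound : ∀ t ∈ Ico (0 : ℝ) 1, ‖g' t‖ ≤ K * (c + ‖g t‖)) :
    c + ‖g 1‖ ≤ (c + ‖g 0‖) * exp K := by
  -- With `ε = K c`, the Grönwall bound shifted by `c` is a pure exponential.
  have := norm_le_gronwallBound_of_norm_deriv_right_le (ε := K * c) hg hg' le_rfl
    (fun t ht => (hbound t ht).trans_eq (by ring)) 1 (right_mem_Icc.2 zero_le_one)
  rw [sub_zero, gronwallBound_mul_eq] at this
  linarith

theorem add_norm_le_mul_exp_of_norm_fderiv_le {E F : Type*} [NormedAddCommGroup E]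
    [NormedSpace ℝ E] [NormedAddCommGroup F] [NormedSpace ℝ F] {f : E → F} {a b : E} {K c : ℝ}
    (hf : ∀ x ∈ segment ℝ a b, DifferentiableAt ℝ f x)
    (hbound : ∀ x ∈ segment ℝ a b, ‖fderiv ℝ f x (b - a)‖ ≤ K * (c + ‖f x‖)) :
    c + ‖f b‖ ≤ (c + ‖f a‖) * exp K := by
  have hseg : ∀ t ∈ Icc (0 : ℝ) 1, AffineMap.lineMap a b t ∈ segment ℝ a b := fun t ht =>
    segment_eq_image_lineMap ℝ a b ▸ mem_image_of_mem _ ht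
  have hderiv : ∀ t ∈ Icc (0 : ℝ) 1, HasDerivAt (f ∘ AffineMap.lineMap a b)
      (fderiv ℝ f (AffineMap.lineMap a b t) (b - a)) t := fun t ht =>
    (hf _ (hseg t ht)).hasFDerivAt.comp_hasDerivAt t AffineMap.hasDerivAt_lineMap
  simpa using add_norm_le_mul_exp_of_norm_deriv_le (g := f ∘ AffineMap.lineMap a b)
    (fun t ht => (hderiv t ht).continuousAt.continuousWithinAt)
    (fun t ht => (hderiv t (Ico_subset_Icc_self ht)).hasDerivWithinAt)
    (fun t ht => hbound _ (hseg t (Ico_subset_Icc_self ht)))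

theorem pd_eq_fderiv_apply {n : ℕ} {f : (Fin n → ℂ) → ℂ} {z : Fin n → ℂ}
    (hf : DifferentiableAt ℂ f z) (m : Fin n) : pd m f z = fderiv ℂ f z (Pi.single m 1) := by
  rw [← Function.update_eq_self m z] at hf
  exact (hf.hasFDerivAt.comp_hasDerivAt (z m) (hasDerivAt_update z m (z m))).deriv.trans
    (by rw [Function.update_eq_self])

theorem norm_fderiv_apply_le_sum_mul_norm_pd {n : ℕ} {f : (Fin n → ℂ) → ℂ} {z : Fin n → ℂ}
    (hf : DifferentiableAt ℂ f z) (v : Fin n → ℂ) :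
    ‖fderiv ℂ f z v‖ ≤ ∑ m, ‖v m‖ * ‖pd m f z‖ := by
  calc ‖fderiv ℂ f z v‖ = ‖∑ m, v m • fderiv ℂ f z (Pi.single m 1)‖ := by
        conv_lhs => rw [pi_eq_sum_univ' v, map_sum]
        simp only [map_smul]
    _ ≤ ∑ m, ‖v m‖ * ‖pd m f z‖ := by
        refine (norm_sum_le _ _).trans_eq (Finset.sum_congr rfl fun m _ => ?_)
        rw [norm_smul, pd_eq_fderiv_apply hf]

theorem add_norm_le_mul_exp_of_norm_pd_le {n : ℕ} {f : (Fin n → ℂ) → ℂ} {P c : ℝ}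
    (hf : Differentiable ℂ f) (hbd : ∀ z m, ‖pd m f z‖ ≤ P * (c + ‖f z‖)) (w₀ w : Fin n → ℂ) :
    c + ‖f w‖ ≤ (c + ‖f w₀‖) * exp (P * ∑ m, ‖w m - w₀ m‖) := by
  refine add_norm_le_mul_exp_of_norm_fderiv_le (fun x _ => (hf x).restrictScalars ℝ)
    fun x _ => ?_
  rw [(hf x).fderiv_restrictScalars ℝ, ContinuousLinearMap.coe_restrictScalars']
  calc ‖fderiv ℂ f x (w - w₀)‖ ≤ ∑ m, ‖w m - w₀ m‖ * ‖pd m f x‖ :=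
        norm_fderiv_apply_le_sum_mul_norm_pd (hf x) _
    _ ≤ ∑ m, ‖w m - w₀ m‖ * (P * (c + ‖f x‖)) :=
        Finset.sum_le_sum fun m _ => mul_le_mul_of_nonneg_left (hbd x m) (norm_nonneg _)
    _ = P * (∑ m, ‖w m - w₀ m‖) * (c + ‖f x‖) := by
        rw [← Finset.sum_mul]; ring

theorem exp_neg_le_div_and_div_le_exp {a b K : ℝ} (ha : 0 < a) (hba : b ≤ a * exp K)
    (hab : a ≤ b * exp K) : exp (-K) ≤ b / a ∧ b / a ≤ exp K := by
  rw [exp_neg, le_div_iff₀ ha, inv_mul_le_iff₀ (exp_pos K), div_le_iff₀ ha, mul_comm (exp K)]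
  exact ⟨hab, hba.trans_eq (mul_comm _ _)⟩

theorem stmt1_general {n : ℕ} (l : Fin n → (Fin n → ℂ) → ℂ)
    (hdiff : ∀ j, Differentiable ℂ (l j))
    (P c : ℝ) (hP : 0 < P) (hcpos : 0 < c)
    (hbd : ∀ z j m, (1 / (c + ‖l j z‖)) * ‖pd m (l j) z‖ ≤ P)
    (Lstar : (Fin n → ℂ) → Fin n → ℝ)
    (hL : ∀ z j, Lstar z j = c + ‖l j z‖) :
    inQn Lstar ∧
    ∀ R : Fin n → ℝ, (∀ j, 0 ≤ R j) → ∀ j : Fin n,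
      ∀ z0 z : Fin n → ℂ, (∀ k, ‖z k - z0 k‖ ≤ R k / Lstar z0 k) →
        Real.exp (-(P / c) * ∑ k, R k) ≤ Lstar z j / Lstar z0 j ∧
        Lstar z j / Lstar z0 j ≤ Real.exp ((P / c) * ∑ k, R k) := by
  obtain rfl : Lstar = fun z j => c + ‖l j z‖ := funext₂ hL
  have hgrowth : ∀ j z m, ‖pd m (l j) z‖ ≤ P * (c + ‖l j z‖) := fun j z m => by
    have := hbd z j m
    rwa [one_div, inv_mul_le_iff₀ (by positivity), mul_comm] at this
  have hratio : ∀ R : Fin n → ℝ, (∀ j, 0 ≤ R j) → ∀ j : Fin n,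
      ∀ z0 z : Fin n → ℂ, (∀ k, ‖z k - z0 k‖ ≤ R k / (c + ‖l k z0‖)) →
        exp (-(P / c) * ∑ k, R k) ≤ (c + ‖l j z‖) / (c + ‖l j z0‖) ∧
        (c + ‖l j z‖) / (c + ‖l j z0‖) ≤ exp ((P / c) * ∑ k, R k) := by
    intro R hR j z0 z hz
    have hdist : P * ∑ k, ‖z k - z0 k‖ ≤ P / c * ∑ k, R k := by
      rw [div_mul_comm, mul_comm, Finset.sum_div]
      gcongr with k
      exact (hz k).trans (div_le_div_of_nonneg_left (hR k) hcpos (by simp))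
    have hdist' : P * ∑ k, ‖z0 k - z k‖ ≤ P / c * ∑ k, R k := by
      simpa only [norm_sub_rev] using hdist
    rw [neg_mul]
    refine exp_neg_le_div_and_div_le_exp (by positivity) ?_ ?_
    · exact (add_norm_le_mul_exp_of_norm_pd_le (hdiff j) (hgrowth j) z0 z).trans (by gcongr)
    · exact (add_norm_le_mul_exp_of_norm_pd_le (hdiff j) (hgrowth j) z z0).trans (by gcongr)
  exact ⟨fun R hR j => ⟨_, _, exp_pos _, hratio R hR j⟩, hratio⟩

/-- If `l_j : ℂ^n → ℂ` and all `∂l_j/∂z_m` are continuous, and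
`|∂l_j(z)/∂z_m| / (c + |l_j(z)|) ≤ P` for all `z, j, m`, then
`L*(z) = (c+|l_1(z)|,…,c+|l_n(z)|) ∈ Q^n`; moreover
`λ_{2,j}(R) ≤ exp((P/c)·(r_1+⋯+r_n))` and `λ_{1,j}(R) ≥ exp(−(P/c)·(r_1+⋯+r_n))`. -/
theorem stmt1 {n : ℕ} (l : Fin n → (Fin n → ℂ) → ℂ)
    (hdiff : ∀ j, Differentiable ℂ (l j))
    (hc : ∀ j, Continuous (l j)) (hdc : ∀ j m, Continuous (pd m (l j)))
    (P c : ℝ) (hP : 0 < P) (hcpos : 0 < c)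
    (hbd : ∀ z j m, (1 / (c + ‖l j z‖)) * ‖pd m (l j) z‖ ≤ P)
    (Lstar : (Fin n → ℂ) → Fin n → ℝ)
    (hL : ∀ z j, Lstar z j = c + ‖l j z‖) :
    inQn Lstar ∧
    ∀ R : Fin n → ℝ, (∀ j, 0 ≤ R j) → ∀ j : Fin n,
      ∀ z0 z : Fin n → ℂ, (∀ k, ‖z k - z0 k‖ ≤ R k / Lstar z0 k) →
        Real.exp (-(P / c) * ∑ k, R k) ≤ Lstar z j / Lstar z0 j ∧
        Lstar z j / Lstar z0 j ≤ Real.exp ((P / c) * ∑ k, R k) :=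
  stmt1_general l hdiff P c hP hcpos hbd Lstar hL
end

section
/- The function l(z) = |e^z| + 1 on C belongs to the class Q^1 but not to the class K^1. -/
/-- The class `Q^1`: `0 < λ₁(r) ≤ λ₂(r) < ∞` for every `r ≥ 0`. -/
def inQ1 (l : ℂ → ℝ) : Prop :=
  ∀ r : ℝ, 0 ≤ r → ∃ m M : ℝ, 0 < m ∧
    ∀ z0 z : ℂ, ‖z - z0‖ ≤ r / l z0 → m ≤ l z / l z0 ∧ l z / l z0 ≤ M

/-- The class `K^1`: there is `c > 0` with `l(r e^{iθ₂}) / l(r e^{iθ₁}) ≤ c`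
for all `r > 0` and `θ₁, θ₂ ∈ [0, 2π]`. -/
def inK1 (l : ℂ → ℝ) : Prop :=
  ∃ c : ℝ, 0 < c ∧ ∀ r : ℝ, 0 < r → ∀ θ₁ θ₂ : ℝ,
    θ₁ ∈ Set.Icc (0:ℝ) (2 * Real.pi) → θ₂ ∈ Set.Icc (0:ℝ) (2 * Real.pi) →
    l ((r : ℂ) * Complex.exp ((θ₂ : ℂ) * Complex.I)) /
      l ((r : ℂ) * Complex.exp ((θ₁ : ℂ) * Complex.I)) ≤ c

/-!
Write `l z = e^{Re z} + 1`. Since `l ≥ 1`, the disc `|z - z₀| ≤ r / l(z₀)` lies in the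
disc of radius `r`, on which `Re z` moves by at most `r`; so `l z / l z₀ ∈ [e^{-r}, e^r]`.
On the other hand `l(r) / l(-r) = (e^r + 1) / (e^{-r} + 1) = e^r` is unbounded in `r`,
comparing the points of argument `0` and `π` on the circle `|z| = r`.
-/

open Real

lemma inQ1_of_one_le_of_le_mul {l : ℂ → ℝ} (hl : ∀ z, 1 ≤ l z)
    (hcomp : ∀ r, 0 ≤ r → ∃ M, ∀ z w : ℂ, ‖z - w‖ ≤ r → l z ≤ M * l w) : inQ1 l := by
  intro r hr
  obtain ⟨M, hM⟩ := hcomp r hr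
  have hl_pos : ∀ z, 0 < l z := fun z => one_pos.trans_le (hl z)
  have hM_pos : 0 < M := pos_of_mul_pos_left ((hl_pos 0).trans_le (hM 0 0 (by simpa))) (hl_pos 0).le
  refine ⟨M⁻¹, M, inv_pos.2 hM_pos, fun z0 z hz => ?_⟩
  have hz' : ‖z - z0‖ ≤ r := hz.trans (div_le_self hr (hl z0))
  constructor
  · rw [le_div_iff₀ (hl_pos z0), inv_mul_le_iff₀ hM_pos]
    exact hM z0 z (by rwa [norm_sub_rev])
  · rw [div_le_iff₀ (hl_pos z0)]
    exact hM z z0 hz'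

lemma exp_add_one_le_exp_mul {x y r : ℝ} (hr : 0 ≤ r) (h : y ≤ x + r) :
    exp y + 1 ≤ exp r * (exp x + 1) := by
  have hy : exp y ≤ exp r * exp x := by
    rw [← exp_add, add_comm r]
    exact exp_le_exp.2 h
  nlinarith [one_le_exp hr]

lemma norm_exp_add_one_le_exp_mul {z w : ℂ} {r : ℝ} (hr : 0 ≤ r) (h : ‖z - w‖ ≤ r) :
    ‖Complex.exp z‖ + 1 ≤ exp r * (‖Complex.exp w‖ + 1) := by
  simp only [Complex.norm_exp]
  refine exp_add_one_le_exp_mul hr ?_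
  have := (Complex.re_le_norm (z - w)).trans h
  rw [Complex.sub_re] at this
  linarith

lemma exp_add_one_div_exp_neg_add_one (r : ℝ) : (exp r + 1) / (exp (-r) + 1) = exp r := by
  rw [div_eq_iff (by positivity), mul_add, ← exp_add, add_neg_cancel, exp_zero, mul_one,
    add_comm]

lemma not_inK1_of_unbounded {l : ℂ → ℝ}
    (h : ∀ c : ℝ, 0 < c → ∃ r : ℝ, 0 < r ∧ c < l r / l (-r)) : ¬ inK1 l := by
  rintro ⟨c, hc, hK⟩
  obtain ⟨r, hr, hcr⟩ := h c hc
  have hπ : π ∈ Set.Icc 0 (2 * π) := ⟨pi_pos.le, by linarith [pi_pos]⟩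
  have h0 : (0 : ℝ) ∈ Set.Icc 0 (2 * π) := ⟨le_rfl, by linarith [pi_pos]⟩
  have := hK r hr π 0 hπ h0
  simp only [Complex.ofReal_zero, zero_mul, Complex.exp_zero, mul_one, Complex.exp_pi_mul_I,
    mul_neg_one] at this
  linarith

/-- The function `l(z) = |e^z| + 1` belongs to `Q^1` but not to `K^1`. -/
theorem stmt5 :
    inQ1 (fun z : ℂ => ‖Complex.exp z‖ + 1) ∧
    ¬ inK1 (fun z : ℂ => ‖Complex.exp z‖ + 1) := by
  constructor
  · exact inQ1_of_one_le_of_le_mul (fun z => le_add_of_nonneg_left (norm_nonneg _))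
      fun r hr => ⟨exp r, fun z w => norm_exp_add_one_le_exp_mul hr⟩
  · refine not_inK1_of_unbounded fun c hc => ⟨c, hc, ?_⟩
    simp only [Complex.norm_exp, Complex.ofReal_re, Complex.neg_re,
      exp_add_one_div_exp_neg_add_one]
    linarith [add_one_le_exp c]
end

section
/- The entire function F(z_1,z_2) = exp(z_1 z_2) has bounded L-index in joint variables equal to 0 for L(z_1,z_2) = (|z_2|+1, |z_1|+1), i.e., for every multi-index J = (j_1,j_2) ∈ Z_+^2 and every (z_1,z_2) ∈ C^2, |∂^{j_1+j_2}F/∂z_1^{j_1}∂z_2^{j_2}(z_1,z_2)| / (j_1! j_2! (|z_2|+1)^{j_1}(|z_1|+1)^{j_2}) ≤ |F(z_1,z_2)|. -/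
/-- Mixed partial derivative `F^{(K)}` for a multi-index `K`. -/
noncomputable def md {n : ℕ} (K : Fin n → ℕ) (f : (Fin n → ℂ) → ℂ) : (Fin n → ℂ) → ℂ :=
  (List.finRange n).foldr (fun j g => (pd j)^[K j] g) f

/-!
Differentiating `exp (z₀ z₁)` `a` times in `z₁` gives `z₀ ^ a * exp (z₀ z₁)`; differentiating this
`m` times in `z₀` by the Leibniz rule gives
`∑ i, (m choose i) * a.descFactorial i * z₀ ^ (a - i) * z₁ ^ (m - i) * exp (z₀ z₁)`.
Bounding `a.descFactorial i * |z₀| ^ (a - i) ≤ a! (|z₀| + 1) ^ a` and summing the binomial series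
in `|z₁|` bounds its modulus by `a! (|z₀| + 1) ^ a (|z₁| + 1) ^ m |F(z)|`; the factor `m!` is spare.
-/

open Complex Finset Function
open scoped Nat

theorem iterate_pd_apply {n : ℕ} (i : Fin n) (k : ℕ) (f : (Fin n → ℂ) → ℂ) (z : Fin n → ℂ) :
    (pd i)^[k] f z = iteratedDeriv k (fun w => f (update z i w)) (z i) := by
  induction k generalizing z with
  | zero => simp
  | succ k ih =>
    simp only [iterate_succ_apply', pd, ih, update_self, update_idem, iteratedDeriv_succ]

theorem md_fin_two (J : Fin 2 → ℕ) (f : (Fin 2 → ℂ) → ℂ) :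
    md J f = (pd 0)^[J 0] ((pd 1)^[J 1] f) := by
  simp [md, List.finRange]

theorem md_cexp_mul_apply (J : Fin 2 → ℕ) (z : Fin 2 → ℂ) :
    md J (fun w : Fin 2 → ℂ => exp (w 0 * w 1)) z =
      iteratedDeriv (J 0) (fun w => w ^ J 1 * exp (z 1 * w)) (z 0) := by
  rw [md_fin_two, iterate_pd_apply]
  congr 1
  funext w
  simp [iterate_pd_apply, mul_comm (z 1)]

theorem Nat.descFactorial_le_factorial (n k : ℕ) : n.descFactorial k ≤ n ! := by
  rcases le_or_gt k n with h | h
  · rw [← Nat.factorial_mul_descFactorial h]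
    exact Nat.le_mul_of_pos_left _ (Nat.factorial_pos _)
  · simp [Nat.descFactorial_of_lt h]

theorem descFactorial_mul_pow_le_factorial_mul_pow (a i : ℕ) {r : ℝ} (hr : 0 ≤ r) :
    (a.descFactorial i : ℝ) * r ^ (a - i) ≤ a ! * (r + 1) ^ a := by
  gcongr
  · exact_mod_cast Nat.descFactorial_le_factorial a i
  · calc r ^ (a - i) ≤ (r + 1) ^ (a - i) := by gcongr; linarith
      _ ≤ (r + 1) ^ a := pow_le_pow_right₀ (by linarith) (Nat.sub_le a i)

theorem norm_iteratedDeriv_pow_mul_cexp_le (a m : ℕ) (x y : ℂ) :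
    ‖iteratedDeriv m (fun w => w ^ a * exp (y * w)) x‖ ≤
      a ! * (‖x‖ + 1) ^ a * (‖y‖ + 1) ^ m * ‖exp (y * x)‖ := by
  rw [iteratedDeriv_fun_mul (by fun_prop) (by fun_prop)]
  simp only [iteratedDeriv_pow, iteratedDeriv_cexp_const_mul]
  calc _ ≤ ∑ i ∈ range (m + 1),
        (m.choose i : ℝ) * ‖y‖ ^ (m - i) * (a ! * (‖x‖ + 1) ^ a * ‖exp (y * x)‖) := by
        refine (norm_sum_le _ _).trans (sum_le_sum fun i _ => ?_)
        simp only [norm_mul, norm_pow, Complex.norm_natCast]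
        calc _ = (m.choose i : ℝ) * ‖y‖ ^ (m - i) *
              ((a.descFactorial i : ℝ) * ‖x‖ ^ (a - i) * ‖exp (y * x)‖) := by ring
          _ ≤ _ := by
            gcongr _ * (?_ * _)
            exact descFactorial_mul_pow_le_factorial_mul_pow a i (norm_nonneg x)
    _ = _ := by
        have binomial :
            ∑ i ∈ range (m + 1), (m.choose i : ℝ) * ‖y‖ ^ (m - i) = (‖y‖ + 1) ^ m := by
          rw [add_comm ‖y‖, add_pow]
          simp [mul_comm]
        rw [← sum_mul, binomial]
        ring

/-- `F(z₁,z₂) = exp(z₁ z₂)` has bounded `L`-index in joint variables equal to `0`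
for `L(z₁,z₂) = (|z₂|+1, |z₁|+1)`: for every multi-index `J` and every point `z`,
`|F^{(J)}(z)| / (J! L^J(z)) ≤ |F(z)|`. -/
theorem stmt7 (J : Fin 2 → ℕ) (z : Fin 2 → ℂ) :
    ‖md J (fun w : Fin 2 → ℂ => Complex.exp (w 0 * w 1)) z‖ /
      ((Nat.factorial (J 0) : ℝ) * (Nat.factorial (J 1)) *
        (‖z 1‖ + 1) ^ (J 0) * (‖z 0‖ + 1) ^ (J 1)) ≤
    ‖Complex.exp (z 0 * z 1)‖ := by
  rw [md_cexp_mul_apply, div_le_iff₀ (by positivity)]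
  calc _ ≤ (J 1)! * (‖z 0‖ + 1) ^ J 1 * (‖z 1‖ + 1) ^ J 0 * ‖exp (z 1 * z 0)‖ :=
        norm_iteratedDeriv_pow_mul_cexp_le _ _ _ _
    _ ≤ (J 0)! * ((J 1)! * (‖z 0‖ + 1) ^ J 1 * (‖z 1‖ + 1) ^ J 0 * ‖exp (z 1 * z 0)‖) :=
        le_mul_of_one_le_left (by positivity) (Nat.one_le_cast.mpr (Nat.factorial_pos _))
    _ = _ := by rw [mul_comm (z 1)]; ring
end

section
/- Let l : C → R_+ be a positive continuous function in Q^1 ∩ K^1 and let f be entire of bounded l-index. Then ln max{ |f(z)| : |z| = r } = O( min over θ ∈ [0,2π] of ∫_0^r l(t e^{iθ}) dt ) as r → ∞. -/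
/-- `f` has bounded `l`-index: there is `m` such that for all `p` and `z`,
`|f^{(p)}(z)|/(l(z)^p p!) ≤ max_{0 ≤ s ≤ m} |f^{(s)}(z)|/(l(z)^s s!)`. -/
def boundedIndex (l : ℂ → ℝ) (f : ℂ → ℂ) : Prop :=
  ∃ m : ℕ, ∀ (p : ℕ) (z : ℂ),
    ‖iteratedDeriv p f z‖ / (l z ^ p * p.factorial) ≤
      sSup {x : ℝ | ∃ s ≤ m,
        x = ‖iteratedDeriv s f z‖ / (l z ^ s * s.factorial)}

open Set Filter MeasureTheory intervalIntegral

-- the maximum in `boundedIndex`, so `boundedIndex l f` unfolds to a bound by `indexMax l f N`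
noncomputable def indexMax (l : ℂ → ℝ) (f : ℂ → ℂ) (N : ℕ) (z : ℂ) : ℝ :=
  sSup {x : ℝ | ∃ s ≤ N, x = ‖iteratedDeriv s f z‖ / (l z ^ s * s.factorial)}

section indexMax

variable {l : ℂ → ℝ} {f : ℂ → ℂ} {N : ℕ} {z : ℂ}

lemma bddAbove_indexMax :
    BddAbove {x : ℝ | ∃ s ≤ N, x = ‖iteratedDeriv s f z‖ / (l z ^ s * s.factorial)} :=
  ((finite_Iic N).image fun s => ‖iteratedDeriv s f z‖ / (l z ^ s * s.factorial)).bddAbove.mono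
    (by rintro _ ⟨s, hs, rfl⟩; exact ⟨s, hs, rfl⟩)

lemma le_indexMax {s : ℕ} (hs : s ≤ N) :
    ‖iteratedDeriv s f z‖ / (l z ^ s * s.factorial) ≤ indexMax l f N z :=
  le_csSup bddAbove_indexMax ⟨s, hs, rfl⟩

lemma indexMax_le {B : ℝ}
    (h : ∀ s ≤ N, ‖iteratedDeriv s f z‖ / (l z ^ s * s.factorial) ≤ B) :
    indexMax l f N z ≤ B :=
  csSup_le ⟨_, 0, N.zero_le, rfl⟩ (by rintro _ ⟨s, hs, rfl⟩; exact h s hs)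

lemma norm_le_indexMax : ‖f z‖ ≤ indexMax l f N z := by
  simpa using le_indexMax (l := l) (f := f) (z := z) N.zero_le

lemma indexMax_nonneg : 0 ≤ indexMax l f N z :=
  (norm_nonneg _).trans norm_le_indexMax

end indexMax

lemma factorial_add_le_two_pow_mul (p s : ℕ) :
    (p + s).factorial ≤ 2 ^ (p + s) * p.factorial * s.factorial := by
  rw [← Nat.add_choose_mul_factorial_mul_factorial p s, mul_assoc, mul_assoc]
  gcongr
  exact Nat.choose_le_two_pow _ _

/-- The Taylor series of `f^{(s)}` at `z₀` is dominated by a geometric series of ratio `1/2`,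
since `(p + s)! / p! ≤ 2^(p + s) s!`. -/
theorem norm_iteratedDeriv_le_of_norm_iteratedDeriv_le {f : ℂ → ℂ} (hf : Differentiable ℂ f)
    {z₀ z : ℂ} {C L : ℝ} (hL : 0 < L)
    (hC : ∀ p, ‖iteratedDeriv p f z₀‖ ≤ C * (L ^ p * p.factorial))
    (hz : ‖z - z₀‖ ≤ 1 / (4 * L)) (s : ℕ) :
    ‖iteratedDeriv s f z‖ ≤ 2 * C * ((2 * L) ^ s * s.factorial) := by
  have hC0 : 0 ≤ C := by simpa using (norm_nonneg _).trans (hC 0)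
  have hs : Differentiable ℂ (iteratedDeriv s f) :=
    (hf.contDiff (n := ⊤)).differentiable_iteratedDeriv s (WithTop.coe_lt_top _)
  refine ((Complex.hasSum_taylorSeries_of_entire hs z₀ z).norm_le_of_bounded
    (hasSum_geometric_two.mul_left (C * ((2 * L) ^ s * s.factorial))) fun p => ?_).trans_eq
    (by ring)
  have hfact : ((p + s).factorial : ℝ) ≤ 2 ^ (p + s) * p.factorial * s.factorial := by
    exact_mod_cast factorial_add_le_two_pow_mul p s
  rw [norm_smul, norm_smul, norm_inv, norm_pow, Complex.norm_natCast, iteratedDeriv_eq_iterate,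
    iteratedDeriv_eq_iterate, ← Function.iterate_add_apply, ← iteratedDeriv_eq_iterate]
  calc (p.factorial : ℝ)⁻¹ * (‖z - z₀‖ ^ p * ‖iteratedDeriv (p + s) f z₀‖)
      ≤ (p.factorial : ℝ)⁻¹ * ((1 / (4 * L)) ^ p *
          (C * (L ^ (p + s) * (2 ^ (p + s) * p.factorial * s.factorial)))) := by
        gcongr
        exact (hC _).trans (by gcongr)
    _ = C * ((2 * L) ^ s * s.factorial) * (1 / 2) ^ p := by
        rw [div_pow, mul_pow, pow_add, pow_add, mul_pow 2 L s, one_pow, one_div, one_div,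
          inv_pow, show (4 : ℝ) = 2 * 2 by norm_num, mul_pow]
        field_simp

theorem indexMax_le_of_norm_sub_le {l : ℂ → ℝ} (hpos : ∀ z, 0 < l z) {f : ℂ → ℂ}
    (hf : Differentiable ℂ f) {N : ℕ}
    (hN : ∀ p z, ‖iteratedDeriv p f z‖ / (l z ^ p * p.factorial) ≤ indexMax l f N z)
    {m : ℝ} (hm : 0 < m) (hm1 : m ≤ 1) {z₀ z : ℂ} (hz : ‖z - z₀‖ ≤ 1 / 4 / l z₀)
    (hl : m * l z₀ ≤ l z) :
    indexMax l f N z ≤ 2 * (2 / m) ^ N * indexMax l f N z₀ := by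
  have hG : ∀ p, ‖iteratedDeriv p f z₀‖ ≤ indexMax l f N z₀ * (l z₀ ^ p * p.factorial) :=
    fun p => (div_le_iff₀ (by have := hpos z₀; positivity)).1 (hN p z₀)
  refine indexMax_le fun s hs => (div_le_iff₀ (by have := hpos z; positivity)).2 ?_
  have h2m : 1 ≤ 2 / m := by rw [le_div_iff₀ hm]; linarith
  have hG0 : 0 ≤ indexMax l f N z₀ := indexMax_nonneg
  calc ‖iteratedDeriv s f z‖
      ≤ 2 * indexMax l f N z₀ * ((2 * l z₀) ^ s * s.factorial) :=
        norm_iteratedDeriv_le_of_norm_iteratedDeriv_le hf (hpos z₀) hG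
          (by rwa [div_div] at hz) s
    _ = 2 * (2 / m) ^ s * indexMax l f N z₀ * ((m * l z₀) ^ s * s.factorial) := by
        rw [mul_pow, mul_pow, div_pow]
        field_simp
    _ ≤ 2 * (2 / m) ^ N * indexMax l f N z₀ * (l z ^ s * s.factorial) := by
        have := hpos z₀
        gcongr

theorem le_pow_mul_of_integral_le {w g : ℝ → ℝ} (hw : Continuous w) (hwpos : ∀ t, 0 < w t)
    {δ m K : ℝ} (hδ : 0 ≤ δ) (hK : 1 ≤ K) (hg0 : 0 ≤ g 0)
    (hlow : ∀ t' t, t' ≤ t → t ≤ t' + δ / w t' → m * w t' ≤ w t)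
    (hstep : ∀ t' t, t' ≤ t → t ≤ t' + δ / w t' → g t ≤ K * g t') (n : ℕ) :
    ∀ {t : ℝ}, 0 ≤ t → ∫ s in (0 : ℝ)..t, w s ≤ n * (m * δ) → g t ≤ K ^ n * g 0 := by
  induction n with
  | zero =>
    intro t ht hint
    obtain rfl : 0 = t := by
      refine ht.eq_or_lt.resolve_right fun ht0 => ?_
      have := intervalIntegral_pos_of_pos_on (hw.intervalIntegrable 0 t) (fun s _ => hwpos s) ht0
      simp only [CharP.cast_eq_zero, zero_mul] at hint
      linarith
    simp
  | succ n ih =>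
    intro t ht hint
    by_cases hnear : t ≤ 0 + δ / w 0
    · calc g t ≤ K * g 0 := hstep 0 t ht hnear
        _ ≤ K ^ (n + 1) * g 0 := by gcongr; exact le_self_pow₀ hK n.succ_ne_zero
    rw [not_le] at hnear
    -- `t` is reached from `t'` in one step, and that step uses up at least `m δ` of `∫ w`
    obtain ⟨t', ⟨ht'0, ht't⟩, hreach⟩ : ∃ t' ∈ Icc 0 t, t' + δ / w t' = t :=
      intermediate_value_Icc ht
        ((continuous_id.add (continuous_const.div hw fun s => (hwpos s).ne')).continuousOn)
        ⟨hnear.le, le_add_of_nonneg_right (div_nonneg hδ (hwpos t).le)⟩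
    have hlast : m * δ ≤ ∫ s in t'..t, w s :=
      calc m * δ = ∫ _ in t'..t, m * w t' := by
            rw [intervalIntegral.integral_const, smul_eq_mul, ← hreach]
            field_simp [(hwpos t').ne']
            ring
        _ ≤ ∫ s in t'..t, w s :=
            integral_mono_on ht't intervalIntegrable_const (hw.intervalIntegrable _ _)
              fun s hs => hlow t' s hs.1 (hreach ▸ hs.2)
    have hsplit := integral_add_adjacent_intervals (hw.intervalIntegrable (μ := volume) 0 t')
      (hw.intervalIntegrable t' t)
    calc g t ≤ K * g t' := hstep t' t ht't hreach.ge
      _ ≤ K * (K ^ n * g 0) := by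
          gcongr
          exact ih ht'0 (by push_cast at hint; linarith)
      _ = K ^ (n + 1) * g 0 := by ring

noncomputable def rayIntegral (l : ℂ → ℝ) (r θ : ℝ) : ℝ :=
  ∫ t in (0 : ℝ)..r, l ((t : ℂ) * Complex.exp ((θ : ℂ) * Complex.I))

noncomputable def minRayIntegral (l : ℂ → ℝ) (r : ℝ) : ℝ :=
  sInf {x : ℝ | ∃ θ ∈ Icc (0 : ℝ) (2 * Real.pi), x = rayIntegral l r θ}

noncomputable def circleMax (f : ℂ → ℂ) (r : ℝ) : ℝ :=
  sSup ((fun z => ‖f z‖) '' {z : ℂ | ‖z‖ = r})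

lemma norm_ofReal_mul_exp_mul_I (t θ : ℝ) :
    ‖(t : ℂ) * Complex.exp ((θ : ℂ) * Complex.I)‖ = |t| := by
  rw [norm_mul, Complex.norm_exp_ofReal_mul_I, Complex.norm_real, Real.norm_eq_abs, mul_one]

lemma continuous_ray {l : ℂ → ℝ} (hcont : Continuous l) (θ : ℝ) :
    Continuous fun t : ℝ => l ((t : ℂ) * Complex.exp ((θ : ℂ) * Complex.I)) := by
  fun_prop

lemma rayIntegral_nonneg {l : ℂ → ℝ} (hpos : ∀ z, 0 < l z) {r : ℝ} (hr : 0 ≤ r) (θ : ℝ) :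
    0 ≤ rayIntegral l r θ :=
  integral_nonneg hr fun _ _ => (hpos _).le

lemma le_minRayIntegral {l : ℂ → ℝ} {r y : ℝ}
    (h : ∀ θ ∈ Icc (0 : ℝ) (2 * Real.pi), y ≤ rayIntegral l r θ) : y ≤ minRayIntegral l r :=
  le_csInf ⟨_, 0, ⟨le_rfl, by positivity⟩, rfl⟩ (by rintro _ ⟨θ, hθ, rfl⟩; exact h θ hθ)

lemma minRayIntegral_nonneg {l : ℂ → ℝ} (hpos : ∀ z, 0 < l z) {r : ℝ} (hr : 0 ≤ r) :
    0 ≤ minRayIntegral l r :=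
  le_minRayIntegral fun θ _ => rayIntegral_nonneg hpos hr θ

lemma exists_mem_Icc_norm_mul_exp_eq (z : ℂ) :
    ∃ θ ∈ Icc (0 : ℝ) (2 * Real.pi), (‖z‖ : ℂ) * Complex.exp ((θ : ℂ) * Complex.I) = z := by
  refine ⟨toIcoMod Real.two_pi_pos 0 z.arg, ?_, ?_⟩
  · simpa using Ico_subset_Icc_self (toIcoMod_mem_Ico Real.two_pi_pos 0 z.arg)
  · conv_rhs => rw [← z.norm_mul_exp_arg_mul_I]
    rw [← self_sub_toIcoDiv_zsmul]
    have := Complex.exp_mul_I_periodic.sub_zsmul_eq (x := (z.arg : ℂ))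
      (toIcoDiv Real.two_pi_pos 0 z.arg)
    push_cast [zsmul_eq_mul] at this ⊢
    rw [this]

lemma log_circleMax_le {f : ℂ → ℂ} {r y : ℝ} (hr : 0 ≤ r) (hy : 0 ≤ y)
    (h : ∀ z, ‖z‖ = r → ‖f z‖ ≤ Real.exp y) : Real.log (circleMax f r) ≤ y := by
  have hmem : ‖f r‖ ∈ (fun z => ‖f z‖) '' {z : ℂ | ‖z‖ = r} :=
    ⟨r, by simp [abs_of_nonneg hr], rfl⟩
  have hle : circleMax f r ≤ Real.exp y :=
    csSup_le ⟨_, hmem⟩ (by rintro _ ⟨z, hz, rfl⟩; exact h z hz)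
  rcases (le_csSup_of_le ⟨_, by rintro _ ⟨z, hz, rfl⟩; exact h z hz⟩ hmem
    (norm_nonneg _)).eq_or_lt with h0 | h0
  · rwa [circleMax, ← h0, Real.log_zero]
  · exact (Real.log_le_iff_le_exp h0).2 hle

lemma log_div_le_integral {w : ℝ → ℝ} (hw : Continuous w) {T r : ℝ} (hT : 0 < T) (hTr : T ≤ r)
    (hw0 : ∀ t ∈ Icc 0 T, 0 ≤ w t) (hwT : ∀ t ∈ Icc T r, t⁻¹ ≤ w t) :
    Real.log (r / T) ≤ ∫ t in (0 : ℝ)..r, w t := by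
  have hinv : ∫ t in T..r, t⁻¹ = Real.log (r / T) :=
    integral_inv fun h => (hT.trans_le (uIcc_of_le hTr ▸ h).1).ne rfl
  rw [← integral_add_adjacent_intervals (hw.intervalIntegrable (μ := volume) 0 T)
    (hw.intervalIntegrable T r), ← hinv]
  have hinvint : IntervalIntegrable (fun t : ℝ => t⁻¹) volume T r :=
    (continuousOn_inv₀.mono fun t ht =>
      (hT.trans_le (uIcc_of_le hTr ▸ ht).1).ne').intervalIntegrable
  linarith [integral_nonneg (μ := volume) hT.le hw0,
    integral_mono_on hTr hinvint (hw.intervalIntegrable T r) hwT]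

section Q1

variable {l : ℂ → ℝ}

lemma inQ1.exists_pos_mul_le (hQ : inQ1 l) (hpos : ∀ z, 0 < l z) {r : ℝ} (hr : 0 ≤ r) :
    ∃ m, 0 < m ∧ m ≤ 1 ∧ ∀ z₀ z, ‖z - z₀‖ ≤ r / l z₀ → m * l z₀ ≤ l z := by
  obtain ⟨m, _, hm, hQm⟩ := hQ r hr
  refine ⟨m, hm, ?_, fun z₀ z hz => (le_div_iff₀ (hpos z₀)).1 (hQm z₀ z hz).1⟩
  have := hpos 0
  simpa [(hpos 0).ne'] using (hQm 0 0 (by simp only [sub_self, norm_zero]; positivity)).1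

lemma inQ1.exists_inv_norm_le (hQ : inQ1 l) (hpos : ∀ z, 0 < l z) :
    ∃ T > 0, ∀ z, T ≤ ‖z‖ → ‖z‖⁻¹ ≤ l z := by
  obtain ⟨_, M, _, hM⟩ := hQ 1 zero_le_one
  have := hpos 0
  have hM1 : 1 ≤ M := by
    simpa [(hpos 0).ne'] using (hM 0 0 (by simp only [sub_self, norm_zero]; positivity)).2
  refine ⟨M / l 0, by positivity, fun z hz => ?_⟩
  have hz0 : 0 < ‖z‖ := lt_of_lt_of_le (by positivity) hz
  rcases le_or_gt ‖z‖ (1 / l z) with hnear | hfar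
  · -- `0` lies in the `Q¹`-disc around `z`
    have h0 : l 0 ≤ M * l z := (div_le_iff₀ (hpos z)).1 (hM z 0 (by simpa using hnear)).2
    calc ‖z‖⁻¹ ≤ (M / l 0)⁻¹ := inv_anti₀ (by positivity) hz
      _ = l 0 / M := inv_div _ _
      _ ≤ l z := (div_le_iff₀' (by linarith)).2 h0
  · exact (inv_le_comm₀ hz0 (hpos z)).2 (by simpa using hfar.le)

lemma tendsto_minRayIntegral_atTop (hQ : inQ1 l) (hpos : ∀ z, 0 < l z) (hcont : Continuous l) :
    Tendsto (minRayIntegral l) atTop atTop := by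
  obtain ⟨T, hT, hTl⟩ := hQ.exists_inv_norm_le hpos
  refine tendsto_atTop_mono' _ ?_
    (Real.tendsto_log_atTop.comp (tendsto_id.atTop_div_const hT))
  filter_upwards [eventually_ge_atTop T] with r hr
  refine le_minRayIntegral fun θ _ => log_div_le_integral (continuous_ray hcont θ) hT hr
    (fun _ _ => (hpos _).le) fun t ht => ?_
  have hnorm : ‖(t : ℂ) * Complex.exp ((θ : ℂ) * Complex.I)‖ = t := by
    rw [norm_ofReal_mul_exp_mul_I, abs_of_pos (hT.trans_le ht.1)]
  simpa only [hnorm] using hTl _ (ht.1.trans hnorm.ge)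

end Q1

lemma inK1.exists_rayIntegral_le_mul_minRayIntegral {l : ℂ → ℝ} (hK : inK1 l)
    (hpos : ∀ z, 0 < l z) (hcont : Continuous l) :
    ∃ c > 0, ∀ r, 0 ≤ r → ∀ θ ∈ Icc (0 : ℝ) (2 * Real.pi),
      rayIntegral l r θ ≤ c * minRayIntegral l r := by
  obtain ⟨c, hc, hlc⟩ := hK
  have hpoint : ∀ t : ℝ, 0 ≤ t → ∀ θ ∈ Icc (0 : ℝ) (2 * Real.pi), ∀ θ' ∈ Icc (0 : ℝ) (2 * Real.pi),
      l ((t : ℂ) * Complex.exp ((θ : ℂ) * Complex.I)) ≤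
        c * l ((t : ℂ) * Complex.exp ((θ' : ℂ) * Complex.I)) := by
    intro t ht θ hθ θ' hθ'
    rcases ht.eq_or_lt with rfl | ht
    · have h1 := hlc 1 one_pos 0 0 ⟨le_rfl, by positivity⟩ ⟨le_rfl, by positivity⟩
      rw [div_self (hpos _).ne'] at h1
      simpa using le_mul_of_one_le_left (hpos 0).le h1
    · exact (div_le_iff₀ (hpos _)).1 (hlc t ht θ' θ hθ' hθ)
  refine ⟨c, hc, fun r hr θ hθ => (div_le_iff₀' hc).1 (le_minRayIntegral fun θ' hθ' => ?_)⟩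
  rw [div_le_iff₀' hc, rayIntegral, rayIntegral, ← intervalIntegral.integral_const_mul]
  exact integral_mono_on hr ((continuous_ray hcont θ).intervalIntegrable _ _)
    (((continuous_ray hcont θ').intervalIntegrable _ _).const_mul c)
    fun t ht => hpoint t ht.1 θ hθ θ' hθ'

theorem le_pow_mul_of_rayIntegral_le {l G : ℂ → ℝ} (hpos : ∀ z, 0 < l z) (hcont : Continuous l)
    {δ m K : ℝ} (hδ : 0 ≤ δ) (hK : 1 ≤ K) (hG0 : 0 ≤ G 0)
    (hlow : ∀ z₀ z, ‖z - z₀‖ ≤ δ / l z₀ → m * l z₀ ≤ l z)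
    (hstep : ∀ z₀ z, ‖z - z₀‖ ≤ δ / l z₀ → G z ≤ K * G z₀)
    (θ : ℝ) (n : ℕ) {t : ℝ} (ht : 0 ≤ t) (hint : rayIntegral l t θ ≤ n * (m * δ)) :
    G (t * Complex.exp ((θ : ℂ) * Complex.I)) ≤ K ^ n * G 0 := by
  set e := Complex.exp ((θ : ℂ) * Complex.I)
  have hdist : ∀ t' s : ℝ, t' ≤ s → s ≤ t' + δ / l (t' * e) →
      ‖(s : ℂ) * e - t' * e‖ ≤ δ / l (t' * e) := by
    intro t' s h1 h2
    rw [← sub_mul, ← Complex.ofReal_sub, norm_ofReal_mul_exp_mul_I, abs_of_nonneg (by linarith)]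
    linarith
  simpa [e] using le_pow_mul_of_integral_le (g := fun s : ℝ => G (s * e)) (continuous_ray hcont θ)
    (fun _ => hpos _) hδ hK (by simpa using hG0)
    (fun t' s h1 h2 => hlow _ _ (hdist t' s h1 h2))
    (fun t' s h1 h2 => hstep _ _ (hdist t' s h1 h2)) n ht hint

theorem log_circleMax_le_of_norm_le_pow {l : ℂ → ℝ} (hpos : ∀ z, 0 < l z) {f : ℂ → ℂ}
    {ε K A c r : ℝ} (hε : 0 < ε) (hK : 1 ≤ K) (hA : 1 ≤ A) (hc : 0 ≤ c) (hr : 0 ≤ r)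
    (hgrowth : ∀ θ (n : ℕ) t, 0 ≤ t → rayIntegral l t θ ≤ n * ε →
      ‖f (t * Complex.exp ((θ : ℂ) * Complex.I))‖ ≤ K ^ n * A)
    (hcmp : ∀ θ ∈ Icc (0 : ℝ) (2 * Real.pi), rayIntegral l r θ ≤ c * minRayIntegral l r) :
    Real.log (circleMax f r) ≤
      Real.log A + Real.log K + c * Real.log K / ε * minRayIntegral l r := by
  have hlogK := Real.log_nonneg hK
  have hmin := minRayIntegral_nonneg hpos hr
  refine log_circleMax_le hr (by have := Real.log_nonneg hA; positivity) fun z hz => ?_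
  obtain ⟨θ, hθ, hzθ⟩ := exists_mem_Icc_norm_mul_exp_eq z
  rw [← hzθ, hz]
  have hI := rayIntegral_nonneg hpos hr θ
  set n := ⌈rayIntegral l r θ / ε⌉₊
  have hn : (n : ℝ) ≤ c * minRayIntegral l r / ε + 1 :=
    (Nat.ceil_lt_add_one (by positivity)).le.trans (by gcongr; exact hcmp θ hθ)
  calc ‖f (r * Complex.exp ((θ : ℂ) * Complex.I))‖
      ≤ K ^ n * A := hgrowth θ n r hr ((div_le_iff₀ hε).1 (Nat.le_ceil _))
    _ = Real.exp (Real.log A + n * Real.log K) := by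
        rw [Real.exp_add, Real.exp_log (by linarith), ← Real.log_pow,
          Real.exp_log (by positivity), mul_comm]
    _ ≤ Real.exp (Real.log A + Real.log K + c * Real.log K / ε * minRayIntegral l r) := by
        have := mul_le_mul_of_nonneg_right hn hlogK
        refine Real.exp_le_exp.2 ?_
        linear_combination this

/-- If `l ∈ Q^1 ∩ K^1` and `f` is entire of bounded `l`-index, then
`ln max{|f(z)| : |z| = r} = O(min_{θ∈[0,2π]} ∫₀ʳ l(t e^{iθ}) dt)` as `r → ∞`. -/
theorem stmt13 (l : ℂ → ℝ) (hpos : ∀ z, 0 < l z) (hcont : Continuous l)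
    (hQ : inQ1 l) (hK : inK1 l)
    (f : ℂ → ℂ) (hf : Differentiable ℂ f) (hind : boundedIndex l f) :
    ∃ C r₀ : ℝ, 0 < C ∧ ∀ r : ℝ, r₀ ≤ r →
      Real.log (sSup ((fun z => ‖f z‖) '' {z : ℂ | ‖z‖ = r})) ≤
        C * sInf {x : ℝ | ∃ θ ∈ Set.Icc (0:ℝ) (2 * Real.pi),
          x = ∫ t in (0:ℝ)..r, l ((t : ℂ) * Complex.exp ((θ : ℂ) * Complex.I))} := by
  obtain ⟨N, hN⟩ := hind
  obtain ⟨m, hm, hm1, hlow⟩ := hQ.exists_pos_mul_le hpos (r := 1 / 4) (by norm_num)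
  obtain ⟨c, hc, hcmp⟩ := hK.exists_rayIntegral_le_mul_minRayIntegral hpos hcont
  set K := 2 * (2 / m) ^ N
  have hK1 : 1 ≤ K := by
    have : 1 ≤ (2 / m) ^ N := one_le_pow₀ (by rw [le_div_iff₀ hm]; linarith)
    linarith
  have hgrowth : ∀ θ (n : ℕ) t, 0 ≤ t → rayIntegral l t θ ≤ n * (m * (1 / 4)) →
      ‖f (t * Complex.exp ((θ : ℂ) * Complex.I))‖ ≤ K ^ n * max (indexMax l f N 0) 1 :=
    fun θ n t ht hint => norm_le_indexMax.trans <|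
      (le_pow_mul_of_rayIntegral_le hpos hcont (by norm_num) hK1 indexMax_nonneg hlow
        (fun z₀ z hz => indexMax_le_of_norm_sub_le hpos hf hN hm hm1 hz (hlow z₀ z hz))
        θ n ht hint).trans (by gcongr; exact le_max_left _ _)
  set a := Real.log (max (indexMax l f N 0) 1) + Real.log K
  set b := c * Real.log K / (m * (1 / 4))
  obtain ⟨r₀, hr₀⟩ := eventually_atTop.1
    ((tendsto_minRayIntegral_atTop hQ hpos hcont).eventually_ge_atTop a)
  have hb : 0 ≤ b := by have := Real.log_nonneg hK1; positivity
  refine ⟨b + 1, max r₀ 0, by positivity, fun r hr => ?_⟩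
  calc Real.log (circleMax f r) ≤ a + b * minRayIntegral l r :=
        log_circleMax_le_of_norm_le_pow hpos (by positivity) hK1 (le_max_right _ _) hc.le
          (le_of_max_le_right hr) hgrowth (hcmp r (le_of_max_le_right hr))
    _ ≤ (b + 1) * minRayIntegral l r := by linarith [hr₀ r (le_of_max_le_left hr)]
end
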